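/- arXiv:2502.19806 — 7 statements merged into one kernel-verified Lean document; each statement's English description precedes it below -/
import Mathlib

section
/- Let n, m, z, ψ, T be positive integers and let A ∈ ℝ^{n×z}, B ∈ ℝ^{n×m}, D ∈ ℝ^{n×ψ}, I₀ ∈ ℝ^{m×T}, W ∈ ℝ^{ψ×T}, Δ ∈ ℝ^{z×T}, S⁺ ∈ ℝ^{n×T} satisfy the data-consistency relation S⁺ = A·Δ + B·I₀ + D·W. If G ∈ ℝ^{T×z} satisfies Δ·G = I_z, then A + B·I₀·G = (S⁺ − D·W)·G as matrices in ℝ^{n×z}; consequently, for every vector ζ ∈ ℝ^z one has A·ζ + B·(I₀·G·ζ) = (S⁺ − D·W)·G·ζ. (This is the closed-loop data-based representation of Lemma 1: with controller gain K = I₀·G, the closed-loop map A·Z(x) + B·K·Z(x) equals (S⁺ − D·W)·G·Z(x).) -/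
open Matrix

theorem Matrix.add_mul_mul_eq_mul_of_eq_add_of_mul_eq_one {R n m z T : Type*} [Semiring R]
    [Fintype m] [Fintype z] [Fintype T] [DecidableEq z]
    {A : Matrix n z R} {B : Matrix n m R} {I₀ : Matrix m T R} {Δ : Matrix z T R}
    {S : Matrix n T R} {G : Matrix T z R} (hS : S = A * Δ + B * I₀) (hG : Δ * G = 1) :
    A + B * I₀ * G = S * G := by
  rw [hS, Matrix.add_mul, Matrix.mul_assoc A, hG, Matrix.mul_one]

theorem closed_loop_data_based_representation_general
    (n m z ψ T : ℕ)
    (A : Matrix (Fin n) (Fin z) ℝ) (B : Matrix (Fin n) (Fin m) ℝ)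
    (D : Matrix (Fin n) (Fin ψ) ℝ) (I₀ : Matrix (Fin m) (Fin T) ℝ)
    (W : Matrix (Fin ψ) (Fin T) ℝ) (Δ : Matrix (Fin z) (Fin T) ℝ)
    (Sp : Matrix (Fin n) (Fin T) ℝ)
    (hdata : Sp = A * Δ + B * I₀ + D * W)
    (G : Matrix (Fin T) (Fin z) ℝ) (hG : Δ * G = 1) :
    A + B * I₀ * G = (Sp - D * W) * G ∧
      ∀ ζ : Fin z → ℝ,
        A.mulVec ζ + B.mulVec ((I₀ * G).mulVec ζ) =
          ((Sp - D * W) * G).mulVec ζ := by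
  have hclosed : A + B * I₀ * G = (Sp - D * W) * G :=
    add_mul_mul_eq_mul_of_eq_add_of_mul_eq_one (eq_sub_of_add_eq hdata.symm).symm hG
  refine ⟨hclosed, fun ζ => ?_⟩
  rw [← hclosed, add_mulVec, mulVec_mulVec, Matrix.mul_assoc]

/-- Closed-loop data-based representation (Lemma 1, first part):
if `S⁺ = A·Δ + B·I₀ + D·W` and `Δ·G = 1`, then `A + B·I₀·G = (S⁺ − D·W)·G`,
and hence `A·ζ + B·(I₀·G·ζ) = (S⁺ − D·W)·G·ζ` for every vector `ζ`. -/
theorem closed_loop_data_based_representation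
    (n m z ψ T : ℕ) (hn : 0 < n) (hm : 0 < m) (hz : 0 < z) (hψ : 0 < ψ) (hT : 0 < T)
    (A : Matrix (Fin n) (Fin z) ℝ) (B : Matrix (Fin n) (Fin m) ℝ)
    (D : Matrix (Fin n) (Fin ψ) ℝ) (I₀ : Matrix (Fin m) (Fin T) ℝ)
    (W : Matrix (Fin ψ) (Fin T) ℝ) (Δ : Matrix (Fin z) (Fin T) ℝ)
    (Sp : Matrix (Fin n) (Fin T) ℝ)
    (hdata : Sp = A * Δ + B * I₀ + D * W)
    (G : Matrix (Fin T) (Fin z) ℝ) (hG : Δ * G = 1) :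
    A + B * I₀ * G = (Sp - D * W) * G ∧
      ∀ ζ : Fin z → ℝ,
        A.mulVec ζ + B.mulVec ((I₀ * G).mulVec ζ) =
          ((Sp - D * W) * G).mulVec ζ :=
  closed_loop_data_based_representation_general n m z ψ T A B D I₀ W Δ Sp hdata G hG
end

section
/- Let n, m, z, ψ, T be positive integers and let A ∈ ℝ^{n×z}, B ∈ ℝ^{n×m}, D ∈ ℝ^{n×ψ}. Suppose two data sets satisfy S⁺ = A·Δ + B·I₀ + D·W (first trajectory, with inputs I₀ ∈ ℝ^{m×T}) and S̄⁺ = A·Δ̄ + D·W̄ (second trajectory, gathered with zero control input), where Δ, Δ̄ ∈ ℝ^{z×T}, W, W̄ ∈ ℝ^{ψ×T}, S⁺, S̄⁺ ∈ ℝ^{n×T}. Suppose Q ∈ ℝ^{T×T} satisfies Δ = Δ̄·Q, and suppose I₀·I₀ᵀ is invertible; define the right pseudoinverse I₀† := I₀ᵀ·(I₀·I₀ᵀ)⁻¹. Then the unknown input matrix is exactly characterized from data as B = (S⁺ − (S̄⁺ − D·W̄)·Q − D·W)·I₀†. -/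
open Matrix

theorem Matrix.mul_transpose_mul_nonsing_inv_eq_one {m n R : Type*} [Fintype m] [DecidableEq m]
    [Fintype n] [CommRing R] {M : Matrix m n R} (h : IsUnit (M * Mᵀ)) :
    M * (Mᵀ * (M * Mᵀ)⁻¹) = 1 := by
  rw [← Matrix.mul_assoc, mul_nonsing_inv _ ((isUnit_iff_isUnit_det _).mp h)]

theorem data_based_characterization_of_B_general
    (n m z ψ T : ℕ)
    (A : Matrix (Fin n) (Fin z) ℝ) (B : Matrix (Fin n) (Fin m) ℝ)
    (D : Matrix (Fin n) (Fin ψ) ℝ)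
    (I₀ : Matrix (Fin m) (Fin T) ℝ)
    (W Wbar : Matrix (Fin ψ) (Fin T) ℝ)
    (Δ Δbar : Matrix (Fin z) (Fin T) ℝ)
    (Sp Sbarp : Matrix (Fin n) (Fin T) ℝ)
    (hdata1 : Sp = A * Δ + B * I₀ + D * W)
    (hdata2 : Sbarp = A * Δbar + D * Wbar)
    (Q : Matrix (Fin T) (Fin T) ℝ) (hQ : Δ = Δbar * Q)
    (hinv : IsUnit (I₀ * I₀ᵀ)) :
    B = (Sp - (Sbarp - D * Wbar) * Q - D * W) * (I₀ᵀ * (I₀ * I₀ᵀ)⁻¹) := by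
  have residual_eq : Sp - (Sbarp - D * Wbar) * Q - D * W = B * I₀ := by
    rw [hdata1, hdata2, hQ, add_sub_cancel_right, Matrix.mul_assoc]
    abel
  rw [residual_eq, Matrix.mul_assoc, mul_transpose_mul_nonsing_inv_eq_one hinv, Matrix.mul_one]

/-- Data-based characterization of the input matrix `B` (Lemma 1, second part):
given two trajectories `S⁺ = A·Δ + B·I₀ + D·W` and `S̄⁺ = A·Δ̄ + D·W̄` (zero input),
a matrix `Q` with `Δ = Δ̄·Q`, and invertibility of `I₀·I₀ᵀ`, one has
`B = (S⁺ − (S̄⁺ − D·W̄)·Q − D·W)·I₀†` with `I₀† = I₀ᵀ·(I₀·I₀ᵀ)⁻¹`. -/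
theorem data_based_characterization_of_B
    (n m z ψ T : ℕ) (hn : 0 < n) (hm : 0 < m) (hz : 0 < z) (hψ : 0 < ψ) (hT : 0 < T)
    (A : Matrix (Fin n) (Fin z) ℝ) (B : Matrix (Fin n) (Fin m) ℝ)
    (D : Matrix (Fin n) (Fin ψ) ℝ)
    (I₀ : Matrix (Fin m) (Fin T) ℝ)
    (W Wbar : Matrix (Fin ψ) (Fin T) ℝ)
    (Δ Δbar : Matrix (Fin z) (Fin T) ℝ)
    (Sp Sbarp : Matrix (Fin n) (Fin T) ℝ)
    (hdata1 : Sp = A * Δ + B * I₀ + D * W)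
    (hdata2 : Sbarp = A * Δbar + D * Wbar)
    (Q : Matrix (Fin T) (Fin T) ℝ) (hQ : Δ = Δbar * Q)
    (hinv : IsUnit (I₀ * I₀ᵀ)) :
    B = (Sp - (Sbarp - D * Wbar) * Q - D * W) * (I₀ᵀ * (I₀ * I₀ᵀ)⁻¹) :=
  data_based_characterization_of_B_general n m z ψ T A B D I₀ W Wbar Δ Δbar Sp Sbarp hdata1 hdata2 Q
    hQ hinv
end

section
/- Let n, T, ψ be positive integers, M ∈ ℝ^{n×T}, Y ∈ ℝ^{T×n}, D ∈ ℝ^{n×ψ}, let Φ ∈ ℝ^{n×n} be symmetric positive definite, and let μ, κ > 0. Assume the Loewner inequality Yᵀ·Mᵀ + M·Y + μ·I_n ⪯ −κ·Φ, i.e. vᵀ(Yᵀ·Mᵀ + M·Y)v + μ|v|² ≤ −κ·vᵀΦv for all v ∈ ℝⁿ. Set P := Φ⁻¹ (which is symmetric positive definite). Then for all x ∈ ℝⁿ and all w ∈ ℝ^ψ: 2·xᵀ·P·(M·Y·P·x + D·w) ≤ −κ·xᵀ·P·x + (‖D‖²/μ)·|w|². -/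
open Matrix

/-- The operator norm of a matrix induced by Euclidean norms on domain and codomain. -/
noncomputable def matOpNorm {n ψ : ℕ} (D : Matrix (Fin n) (Fin ψ) ℝ) : ℝ :=
  ‖LinearMap.toContinuousLinearMap (Matrix.toEuclideanLin D)‖

/-- Core dissipation estimate (proof of Theorem 2): if
`Yᵀ·Mᵀ + M·Y + μ·I_n ⪯ −κ·Φ` (in the Loewner quadratic-form sense) with `Φ`
symmetric positive definite and `P := Φ⁻¹`, then
`2·xᵀ·P·(M·Y·P·x + D·w) ≤ −κ·xᵀ·P·x + (‖D‖²/μ)·|w|²` for all `x`, `w`. -/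
theorem dissipation_estimate
    (n T ψ : ℕ) (hn : 0 < n) (hT : 0 < T) (hψ : 0 < ψ)
    (M : Matrix (Fin n) (Fin T) ℝ) (Y : Matrix (Fin T) (Fin n) ℝ)
    (D : Matrix (Fin n) (Fin ψ) ℝ)
    (Φ : Matrix (Fin n) (Fin n) ℝ) (hΦ : Φ.PosDef)
    (μ κ : ℝ) (hμ : 0 < μ) (hκ : 0 < κ)
    (hLoewner : ∀ v : Fin n → ℝ,
      v ⬝ᵥ (Yᵀ * Mᵀ + M * Y).mulVec v + μ * (∑ i, v i ^ 2) ≤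
        -κ * (v ⬝ᵥ Φ.mulVec v)) :
    ∀ (x : Fin n → ℝ) (w : Fin ψ → ℝ),
      2 * (x ⬝ᵥ (Φ⁻¹).mulVec ((M * Y * Φ⁻¹).mulVec x + D.mulVec w)) ≤
        -κ * (x ⬝ᵥ (Φ⁻¹).mulVec x) + (matOpNorm D ^ 2 / μ) * (∑ j, w j ^ 2) := by
  intro x w
  have hdet : IsUnit Φ.det := isUnit_iff_ne_zero.mpr hΦ.det_pos.ne'
  have hΦt : Φᵀ = Φ := hΦ.1.eq
  have hPt : (Φ⁻¹)ᵀ = Φ⁻¹ := by rw [Matrix.transpose_nonsing_inv, hΦt]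
  set v : Fin n → ℝ := (Φ⁻¹).mulVec x with hv
  have key : ∀ u : Fin n → ℝ, x ⬝ᵥ (Φ⁻¹).mulVec u = v ⬝ᵥ u := by
    intro u
    rw [Matrix.dotProduct_mulVec, ← Matrix.mulVec_transpose, hPt]
  have hΦv : Φ.mulVec v = x := by
    rw [hv, Matrix.mulVec_mulVec, Matrix.mul_nonsing_inv Φ hdet, Matrix.one_mulVec]
  -- Loewner consequence
  have hL := hLoewner v
  have hsym : v ⬝ᵥ (Yᵀ * Mᵀ).mulVec v = v ⬝ᵥ (M * Y).mulVec v := by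
    rw [Matrix.dotProduct_mulVec, ← Matrix.mulVec_transpose]
    rw [Matrix.transpose_mul, Matrix.transpose_transpose, Matrix.transpose_transpose]
    exact dotProduct_comm _ _
  have hΦq : v ⬝ᵥ Φ.mulVec v = x ⬝ᵥ v := by rw [hΦv, dotProduct_comm]
  rw [Matrix.add_mulVec, dotProduct_add, hsym, hΦq] at hL
  -- cross term bound
  set C : ℝ := matOpNorm D with hC
  have hC0 : 0 ≤ C := norm_nonneg _
  set V : EuclideanSpace ℝ (Fin n) := (WithLp.equiv 2 (Fin n → ℝ)).symm v with hV
  set W : EuclideanSpace ℝ (Fin ψ) := (WithLp.equiv 2 (Fin ψ → ℝ)).symm w with hW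
  have hDW : ‖(Matrix.toEuclideanLin D) W‖ ≤ C * ‖W‖ :=
    (LinearMap.toContinuousLinearMap (Matrix.toEuclideanLin D)).le_opNorm W
  have hinner : v ⬝ᵥ D.mulVec w = inner ℝ V ((Matrix.toEuclideanLin D) W) := by
    rw [hW, WithLp.equiv_symm_apply, Matrix.toEuclideanLin_apply_piLp_toLp]
    simp [PiLp.inner_apply, hV, dotProduct, RCLike.inner_apply, mul_comm]
  have hVnorm : ‖V‖ ^ 2 = ∑ i, v i ^ 2 := by
    rw [← real_inner_self_eq_norm_sq]
    rw [real_inner_self_eq_norm_sq, EuclideanSpace.norm_sq_eq]; simp [hV, Real.norm_eq_abs, sq_abs]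
  have hWnorm : ‖W‖ ^ 2 = ∑ j, w j ^ 2 := by
    rw [← real_inner_self_eq_norm_sq]
    rw [real_inner_self_eq_norm_sq, EuclideanSpace.norm_sq_eq]; simp [hW, Real.norm_eq_abs, sq_abs]
  have hcross : v ⬝ᵥ D.mulVec w ≤ ‖V‖ * (C * ‖W‖) := by
    rw [hinner]
    calc inner ℝ V ((Matrix.toEuclideanLin D) W) ≤ ‖V‖ * ‖(Matrix.toEuclideanLin D) W‖ :=
          real_inner_le_norm _ _
      _ ≤ ‖V‖ * (C * ‖W‖) := by
          exact mul_le_mul_of_nonneg_left hDW (norm_nonneg _)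
  have hfact : C ^ 2 / μ * (∑ j, w j ^ 2) * μ = C ^ 2 * (∑ j, w j ^ 2) := by
    field_simp
  have hcross2 : 2 * (v ⬝ᵥ D.mulVec w) ≤ μ * (∑ i, v i ^ 2) + C ^ 2 / μ * (∑ j, w j ^ 2) := by
    nlinarith [sq_nonneg (μ * ‖V‖ - C * ‖W‖), hμ, hVnorm, hWnorm, hcross, hfact,
      mul_pos hμ hμ]
  -- assemble
  rw [Matrix.mulVec_add, dotProduct_add, key, key]
  have h1 : v ⬝ᵥ (M * Y * Φ⁻¹).mulVec x = v ⬝ᵥ (M * Y).mulVec v := by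
    rw [hv, ← Matrix.mulVec_mulVec]
  rw [h1]
  have hxv : x ⬝ᵥ (Φ⁻¹).mulVec x = x ⬝ᵥ v := rfl
  rw [hxv]
  linarith
end

section
/- Let n, r, m, ψ, T be positive integers and set z = n + r. Let A ∈ ℝ^{n×z}, B ∈ ℝ^{n×m}, D ∈ ℝ^{n×ψ}, let m₀ : ℝⁿ → ℝ^r be any function, and define the dictionary map Z : ℝⁿ → ℝ^z by Z(x) = (x, m₀(x)) (upper block x, lower block m₀(x)). Let the data matrices I₀ ∈ ℝ^{m×T}, W ∈ ℝ^{ψ×T}, Δ ∈ ℝ^{z×T}, S⁺ ∈ ℝ^{n×T} satisfy S⁺ = A·Δ + B·I₀ + D·W, and set M := S⁺ − D·W. Suppose that for some κ, μ > 0 there exist G₂ ∈ ℝ^{T×r}, Y ∈ ℝ^{T×n}, and a symmetric positive definite Φ ∈ ℝ^{n×n} such that: (i) M·G₂ = 0_{n×r}; (ii) Δ·G₂ equals the block matrix with upper block 0_{n×r} and lower block I_r; (iii) Δ·Y equals the block matrix with upper block Φ and lower block 0_{r×n}; (iv) Yᵀ·Mᵀ + M·Y + μ·I_n ⪯ −κ·Φ.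 Set P := Φ⁻¹ and K := I₀·[Y·P G₂] ∈ ℝ^{m×z}. Then V(x) := xᵀ·P·x satisfies: (a) λ_min(P)·|x|² ≤ V(x) ≤ λ_max(P)·|x|² for all x ∈ ℝⁿ, where λ_min(P) and λ_max(P) are the smallest and largest eigenvalues of the symmetric positive definite matrix P; and (b) for all x ∈ ℝⁿ and all w ∈ ℝ^ψ, 2·xᵀ·P·(A·Z(x) + B·K·Z(x) + D·w) ≤ −κ·V(x) + (‖D‖²/μ)·|w|². That is, V is an ISS Lyapunov function for the subsystem ẋ = A·Z(x) + B·u + D·w under the data-driven controller u*(x) = K·Z(x), with ISS gain ρ = ‖D‖²/μ. -/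
open Matrix

section Aux

open Finset in
/-- Rayleigh-quotient bounds for a real symmetric matrix. -/
lemma rayleigh_aux {n : ℕ} (P : Matrix (Fin n) (Fin n) ℝ) (hP : P.IsHermitian)
    (x : Fin n → ℝ) :
    (⨅ i, hP.eigenvalues i) * (∑ i, x i ^ 2) ≤ x ⬝ᵥ P.mulVec x ∧
      x ⬝ᵥ P.mulVec x ≤ (⨆ i, hP.eigenvalues i) * (∑ i, x i ^ 2) := by
  classical
  set b := hP.eigenvectorBasis with hb
  set x' : EuclideanSpace ℝ (Fin n) := WithLp.toLp 2 x with hx'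
  set c : Fin n → ℝ := fun j => b.repr x' j with hc
  have hPt : Pᵀ = P := by
    calc Pᵀ = Pᴴ := by ext i j; simp [Matrix.conjTranspose_apply]
    _ = P := hP
  have hinner : ∀ y z : EuclideanSpace ℝ (Fin n),
      (inner ℝ y z : ℝ) = (y : Fin n → ℝ) ⬝ᵥ (z : Fin n → ℝ) := by
    intro y z
    simp [PiLp.inner_apply, dotProduct, mul_comm]
  have hrepr : ∀ j, c j = (b j : Fin n → ℝ) ⬝ᵥ x := by
    intro j
    show b.repr x' j = _
    rw [b.repr_apply_apply]
    exact hinner _ _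
  have hPx : ∀ j, b.repr (WithLp.toLp 2 (P.mulVec x) : EuclideanSpace ℝ (Fin n)) j
      = hP.eigenvalues j * c j := by
    intro j
    rw [b.repr_apply_apply, hinner]
    rw [Matrix.dotProduct_mulVec, ← Matrix.mulVec_transpose, hPt]
    have hme : P *ᵥ (b j : Fin n → ℝ) = hP.eigenvalues j • (b j : Fin n → ℝ) :=
      hP.mulVec_eigenvectorBasis j
    rw [hme, smul_dotProduct, hrepr j]
    simp [smul_eq_mul]
  have key : x ⬝ᵥ P.mulVec x = ∑ j, hP.eigenvalues j * c j ^ 2 := by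
    have h := b.repr.inner_map_map x' (WithLp.toLp 2 (P.mulVec x) : EuclideanSpace ℝ (Fin n))
    rw [hinner] at h
    rw [hinner] at h
    rw [← h]
    rw [dotProduct]
    apply Finset.sum_congr rfl
    intro j _
    rw [hPx j]
    show c j * _ = _
    ring
  have hnorm : (∑ i, x i ^ 2) = ∑ j, c j ^ 2 := by
    have h := b.repr.inner_map_map x' x'
    rw [hinner] at h
    rw [hinner] at h
    calc (∑ i, x i ^ 2) = x' ⬝ᵥ x' := by
          simp only [dotProduct, sq]
          rfl
      _ = b.repr x' ⬝ᵥ b.repr x' := h.symm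
      _ = ∑ j, c j ^ 2 := by
          simp only [dotProduct, hc, sq]
          
  have hbb : BddBelow (Set.range hP.eigenvalues) := (Set.finite_range _).bddBelow
  have hba : BddAbove (Set.range hP.eigenvalues) := (Set.finite_range _).bddAbove
  constructor
  · rw [key, hnorm, Finset.mul_sum]
    apply Finset.sum_le_sum
    intro j _
    exact mul_le_mul_of_nonneg_right (ciInf_le hbb j) (sq_nonneg _)
  · rw [key, hnorm, Finset.mul_sum]
    apply Finset.sum_le_sum
    intro j _
    exact mul_le_mul_of_nonneg_right (le_ciSup hba j) (sq_nonneg _)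

/-- Euclidean norm bound for matrix-vector products. -/
lemma mulVec_sq_sum_le {n ψ : ℕ} (D : Matrix (Fin n) (Fin ψ) ℝ) (w : Fin ψ → ℝ) :
    (∑ i, (D.mulVec w) i ^ 2) ≤ matOpNorm D ^ 2 * ∑ j, w j ^ 2 := by
  set L := LinearMap.toContinuousLinearMap (Matrix.toEuclideanLin D) with hL
  set w' : EuclideanSpace ℝ (Fin ψ) := WithLp.toLp 2 w with hw'
  have hnorm : ∀ (k : ℕ) (u : EuclideanSpace ℝ (Fin k)), ‖u‖ ^ 2 = ∑ i, u i ^ 2 := by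
    intro k u
    rw [EuclideanSpace.norm_eq, Real.sq_sqrt (by positivity)]
    simp [sq_abs]
  have hLw : (L w' : Fin n → ℝ) = D.mulVec w := by
    show (Matrix.toEuclideanLin D w' : Fin n → ℝ) = D.mulVec w
    rw [Matrix.toEuclideanLin_apply]
  have h1 : ‖L w'‖ ≤ matOpNorm D * ‖w'‖ := L.le_opNorm w'
  have h2 : ‖L w'‖ ^ 2 ≤ (matOpNorm D * ‖w'‖) ^ 2 :=
    pow_le_pow_left₀ (norm_nonneg _) h1 2
  calc (∑ i, (D.mulVec w) i ^ 2) = ‖L w'‖ ^ 2 := by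
        rw [hnorm n (L w')]
        apply Finset.sum_congr rfl
        intro i _
        rw [show (L w') i = (D.mulVec w) i from congrFun hLw i]
    _ ≤ (matOpNorm D * ‖w'‖) ^ 2 := h2
    _ = matOpNorm D ^ 2 * ∑ j, w j ^ 2 := by
        rw [mul_pow, hnorm ψ w']

end Aux

/-- Theorem 2 (Data-Driven ISS Lyapunov Functions), stated pointwise.
Under the data-consistency relation `S⁺ = A·Δ + B·I₀ + D·W`, the conditions
(i) `M·G₂ = 0`, (ii) `Δ·G₂ = [0; I_r]`, (iii) `Δ·Y = [Φ; 0]`,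
(iv) `Yᵀ·Mᵀ + M·Y + μ·I_n ⪯ −κ·Φ` (with `M := S⁺ − D·W`), and `Φ` symmetric
positive definite imply that `V(x) = xᵀ·P·x` with `P := Φ⁻¹` satisfies
(a) `λ_min(P)·|x|² ≤ V(x) ≤ λ_max(P)·|x|²` and
(b) `2·xᵀ·P·(A·Z(x) + B·K·Z(x) + D·w) ≤ −κ·V(x) + (‖D‖²/μ)·|w|²`,
where `Z(x) = (x, m₀(x))` and `K := I₀·[Y·P  G₂]`. -/
theorem data_driven_ISS_Lyapunov
    (n r m ψ T : ℕ) (hn : 0 < n) (hr : 0 < r) (hm : 0 < m) (hψ : 0 < ψ) (hT : 0 < T)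
    (A : Matrix (Fin n) (Fin n ⊕ Fin r) ℝ) (B : Matrix (Fin n) (Fin m) ℝ)
    (D : Matrix (Fin n) (Fin ψ) ℝ)
    (m₀ : (Fin n → ℝ) → (Fin r → ℝ))
    (I₀ : Matrix (Fin m) (Fin T) ℝ) (W : Matrix (Fin ψ) (Fin T) ℝ)
    (Δ : Matrix (Fin n ⊕ Fin r) (Fin T) ℝ) (Sp : Matrix (Fin n) (Fin T) ℝ)
    (hdata : Sp = A * Δ + B * I₀ + D * W)
    (κ μ : ℝ) (hκ : 0 < κ) (hμ : 0 < μ)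
    (G₂ : Matrix (Fin T) (Fin r) ℝ) (Y : Matrix (Fin T) (Fin n) ℝ)
    (Φ : Matrix (Fin n) (Fin n) ℝ) (hΦ : Φ.PosDef)
    (hi : (Sp - D * W) * G₂ = 0)
    (hii : Δ * G₂ =
      Matrix.fromRows (0 : Matrix (Fin n) (Fin r) ℝ) (1 : Matrix (Fin r) (Fin r) ℝ))
    (hiii : Δ * Y = Matrix.fromRows Φ (0 : Matrix (Fin r) (Fin n) ℝ))
    (hiv : ∀ v : Fin n → ℝ,
      v ⬝ᵥ (Yᵀ * (Sp - D * W)ᵀ + (Sp - D * W) * Y).mulVec v + μ * (∑ i, v i ^ 2) ≤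
        -κ * (v ⬝ᵥ Φ.mulVec v)) :
    ∃ hP : (Φ⁻¹).IsHermitian,
      (∀ x : Fin n → ℝ,
        (⨅ i, hP.eigenvalues i) * (∑ i, x i ^ 2) ≤ x ⬝ᵥ (Φ⁻¹).mulVec x ∧
          x ⬝ᵥ (Φ⁻¹).mulVec x ≤ (⨆ i, hP.eigenvalues i) * (∑ i, x i ^ 2)) ∧
      (∀ (x : Fin n → ℝ) (w : Fin ψ → ℝ),
        2 * (x ⬝ᵥ (Φ⁻¹).mulVec
          (A.mulVec (Sum.elim x (m₀ x)) +
            B.mulVec ((I₀ * Matrix.fromCols (Y * Φ⁻¹) G₂).mulVec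
              (Sum.elim x (m₀ x))) +
            D.mulVec w)) ≤
          -κ * (x ⬝ᵥ (Φ⁻¹).mulVec x) + (matOpNorm D ^ 2 / μ) * (∑ j, w j ^ 2)) := by
  classical
  have hPD : (Φ⁻¹).PosDef := hΦ.inv
  refine ⟨hPD.1, fun x => rayleigh_aux _ hPD.1 x, ?_⟩
  -- Part (b)
  set P : Matrix (Fin n) (Fin n) ℝ := Φ⁻¹ with hPdef
  have hPt : Pᵀ = P := by
    calc Pᵀ = Pᴴ := by ext i j; simp [Matrix.conjTranspose_apply]
    _ = P := hPD.1
  have hΦP : Φ * P = 1 := Matrix.mul_nonsing_inv Φ (isUnit_iff_ne_zero.mpr hΦ.det_pos.ne')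
  set M : Matrix (Fin n) (Fin T) ℝ := Sp - D * W with hMdef
  have hM : M = A * Δ + B * I₀ := by rw [hMdef, hdata]; abel
  set F : Matrix (Fin T) (Fin n ⊕ Fin r) ℝ := Matrix.fromCols (Y * P) G₂ with hFdef
  have hΔF : Δ * F = 1 := by
    rw [hFdef, Matrix.mul_fromCols, ← Matrix.mul_assoc, hiii, hii,
      Matrix.fromRows_mul, hΦP, Matrix.zero_mul,
      Matrix.fromCols_fromRows_eq_fromBlocks, Matrix.fromBlocks_one]
  have hMF : M * F = Matrix.fromCols (M * Y * P) 0 := by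
    rw [hFdef, Matrix.mul_fromCols, hi, Matrix.mul_assoc]
  have hAB : A + B * (I₀ * F) = M * F := by
    rw [hM, Matrix.add_mul, Matrix.mul_assoc A, hΔF, Matrix.mul_one,
      Matrix.mul_assoc]
  intro x w
  set Z : (Fin n ⊕ Fin r) → ℝ := Sum.elim x (m₀ x) with hZdef
  set v : Fin n → ℝ := P.mulVec x with hvdef
  have hdotP : ∀ u : Fin n → ℝ, x ⬝ᵥ P.mulVec u = v ⬝ᵥ u := by
    intro u
    rw [Matrix.dotProduct_mulVec, ← Matrix.mulVec_transpose, hPt]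
  -- the closed-loop vector field
  have hcl : A.mulVec Z + B.mulVec ((I₀ * F).mulVec Z) = (M * Y).mulVec v := by
    have h1 : A.mulVec Z + B.mulVec ((I₀ * F).mulVec Z)
        = (A + B * (I₀ * F)).mulVec Z := by
      rw [Matrix.add_mulVec, Matrix.mulVec_mulVec]
    rw [h1, hAB, hMF, hZdef, Matrix.fromCols_mulVec_sumElim]
    simp [hvdef, Matrix.mulVec_mulVec]
  -- quadratic-form identities
  have hΦv : Φ.mulVec v = x := by
    rw [hvdef, Matrix.mulVec_mulVec, hΦP, Matrix.one_mulVec]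
  have hvΦv : v ⬝ᵥ Φ.mulVec v = x ⬝ᵥ P.mulVec x := by
    rw [hΦv, dotProduct_comm, hvdef]
  have hsym : v ⬝ᵥ (Yᵀ * Mᵀ + M * Y).mulVec v = 2 * (v ⬝ᵥ (M * Y).mulVec v) := by
    rw [Matrix.add_mulVec, dotProduct_add]
    have : v ⬝ᵥ (Yᵀ * Mᵀ).mulVec v = v ⬝ᵥ (M * Y).mulVec v := by
      rw [show Yᵀ * Mᵀ = (M * Y)ᵀ by rw [Matrix.transpose_mul],
        Matrix.mulVec_transpose, dotProduct_comm, ← Matrix.dotProduct_mulVec]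
    rw [this]; ring
  have hiv' := hiv v
  rw [hsym, hvΦv] at hiv'
  -- cross term bound
  have hterm : ∀ a u : ℝ, 2 * (a * u) ≤ μ * a ^ 2 + (1 / μ) * u ^ 2 := by
    intro a u
    rw [← sub_nonneg]
    have heq : μ * a ^ 2 + (1 / μ) * u ^ 2 - 2 * (a * u) = (μ * a - u) ^ 2 / μ := by
      field_simp; ring
    rw [heq]
    positivity
  have hcross : 2 * (v ⬝ᵥ D.mulVec w)
      ≤ μ * (∑ i, v i ^ 2) + (1 / μ) * (∑ i, (D.mulVec w) i ^ 2) := by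
    have h2 : (2 : ℝ) * (v ⬝ᵥ D.mulVec w) = ∑ i, 2 * (v i * (D.mulVec w) i) := by
      rw [dotProduct, Finset.mul_sum]
    rw [h2, Finset.mul_sum, Finset.mul_sum, ← Finset.sum_add_distrib]
    exact Finset.sum_le_sum fun i _ => hterm _ _
  have hDw := mulVec_sq_sum_le D w
  -- final assembly
  have hLHS : 2 * (x ⬝ᵥ P.mulVec
      (A.mulVec Z + B.mulVec ((I₀ * F).mulVec Z) + D.mulVec w))
      = 2 * (v ⬝ᵥ (M * Y).mulVec v) + 2 * (v ⬝ᵥ D.mulVec w) := by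
    rw [hdotP, hcl, dotProduct_add]
    ring
  rw [hLHS]
  have h1 : 2 * (v ⬝ᵥ (M * Y).mulVec v)
      ≤ -κ * (x ⬝ᵥ P.mulVec x) - μ * (∑ i, v i ^ 2) := by linarith
  have h2 : 2 * (v ⬝ᵥ D.mulVec w)
      ≤ μ * (∑ i, v i ^ 2) + (1 / μ) * (matOpNorm D ^ 2 * ∑ j, w j ^ 2) := by
    refine le_trans hcross ?_
    have : (1 / μ) * (∑ i, (D.mulVec w) i ^ 2)
        ≤ (1 / μ) * (matOpNorm D ^ 2 * ∑ j, w j ^ 2) :=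
      mul_le_mul_of_nonneg_left hDw (by positivity)
    linarith
  have : (1 / μ) * (matOpNorm D ^ 2 * ∑ j, w j ^ 2)
      = (matOpNorm D ^ 2 / μ) * ∑ j, w j ^ 2 := by ring
  linarith [h1, h2, this.le, this.ge]
end

section
/- Let n, m, z, ψ ≥ 1, let A ∈ ℝ^{n×z}, B ∈ ℝ^{n×m}, C ∈ ℝ^{m×n}, D ∈ ℝ^{n×ψ}, and let Z : ℝⁿ → ℝ^z. Let u*, u_I, γ : ℝ → ℝ^m and w : ℝ → ℝ^ψ be functions, and let x : ℝ → ℝⁿ and ζ : ℝ → ℝ^m be differentiable with, for all t ∈ ℝ: x'(t) = A·Z(x(t)) + B·(u*(t) + u_I(t)) + D·w(t) + B·γ(t) and ζ'(t) = −C·(A·Z(x(t)) + B·u*(t) + D·w(t)). Define σ(t) := C·x(t) + ζ(t). If the m×m matrix C·B is invertible and σ'(t) = 0 for all t (the system is in sliding mode), then u_I(t) = −γ(t) for all t, and consequently x'(t) = A·Z(x(t)) + B·u*(t) + D·w(t) for all t; that is, the motion in sliding mode equals the nominal dynamics under the ideal controller u*. -/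
/-!
Differentiating `σ = C·x + ζ` along the perturbed dynamics, the drift terms
`A·Z(x) + B·u* + D·w` cancel against `ζ'`, leaving `σ' = (C·B)·(u_I + γ)`. In sliding mode
`σ' = 0`, and invertibility of `C·B` forces the equivalent control `u_I = −γ`, which removes
the matched perturbation from `x'`.
-/

open Matrix

variable {𝕜 : Type*} [NontriviallyNormedField 𝕜] {m n : Type*} [Fintype n]

theorem HasDerivAt.const_mulVec {f : 𝕜 → n → 𝕜} {f' : n → 𝕜} {t : 𝕜}
    (M : Matrix m n 𝕜) (hf : HasDerivAt f f' t) :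
    HasDerivAt (fun s => M *ᵥ f s) (M *ᵥ f') t :=
  hasDerivAt_pi.2 fun i => HasDerivAt.fun_sum fun j _ => (hasDerivAt_pi.1 hf j).const_mul (M i j)

theorem hasDerivAt_mulVec_add_of_drift_cancel [Fintype m] {B : Matrix n m 𝕜}
    {C : Matrix m n 𝕜} {x : 𝕜 → n → 𝕜} {ζ : 𝕜 → m → 𝕜} {a : n → 𝕜} {v : m → 𝕜} {t : 𝕜}
    (hx : HasDerivAt x (a + B *ᵥ v) t) (hζ : HasDerivAt ζ (-(C *ᵥ a)) t) :
    HasDerivAt (fun s => C *ᵥ x s + ζ s) ((C * B) *ᵥ v) t := by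
  refine ((hx.const_mulVec C).add hζ).congr_deriv ?_
  rw [mulVec_add, mulVec_mulVec]
  abel

theorem motion_equation_in_sliding_mode_general
    (n m z ψ : ℕ)
    (A : Matrix (Fin n) (Fin z) ℝ) (B : Matrix (Fin n) (Fin m) ℝ)
    (C : Matrix (Fin m) (Fin n) ℝ) (D : Matrix (Fin n) (Fin ψ) ℝ)
    (Z : (Fin n → ℝ) → (Fin z → ℝ))
    (ustar uI γ : ℝ → Fin m → ℝ) (w : ℝ → Fin ψ → ℝ)
    (x : ℝ → Fin n → ℝ) (ζ : ℝ → Fin m → ℝ)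
    (hx : ∀ t : ℝ, HasDerivAt x
      (A.mulVec (Z (x t)) + B.mulVec (ustar t + uI t) + D.mulVec (w t) +
        B.mulVec (γ t)) t)
    (hζ : ∀ t : ℝ, HasDerivAt ζ
      (-(C.mulVec (A.mulVec (Z (x t)) + B.mulVec (ustar t) + D.mulVec (w t)))) t)
    (hCB : IsUnit (C * B))
    (hslide : ∀ t : ℝ, HasDerivAt (fun s => C.mulVec (x s) + ζ s) 0 t) :
    ∀ t : ℝ, uI t = -γ t ∧
      HasDerivAt x (A.mulVec (Z (x t)) + B.mulVec (ustar t) + D.mulVec (w t)) t := by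
  intro t
  set drift := A *ᵥ Z (x t) + B *ᵥ ustar t + D *ᵥ w t
  have hx_split : HasDerivAt x (drift + B *ᵥ (uI t + γ t)) t := by
    convert hx t using 1
    simp only [drift, mulVec_add]
    abel
  have hσ := hasDerivAt_mulVec_add_of_drift_cancel hx_split (hζ t)
  have hmatched : uI t + γ t = 0 :=
    eq_zero_of_mulVec_eq_zero ((isUnit_iff_isUnit_det _).1 hCB).ne_zero ((hslide t).unique hσ).symm
  refine ⟨eq_neg_of_add_eq_zero_left hmatched, ?_⟩
  simpa only [hmatched, mulVec_zero, add_zero] using hx_split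

/-- Theorem 3 (Motion Equation in Sliding Mode), differentiable-solution version:
along the perturbed dynamics `x' = A·Z(x) + B·(u* + u_I) + D·w + B·γ` with
transient function `ζ' = −C·(A·Z(x) + B·u* + D·w)` and sliding variable
`σ = C·x + ζ`, if `C·B` is invertible and `σ' ≡ 0`, then `u_I = −γ` and the
motion equals the nominal dynamics `x' = A·Z(x) + B·u* + D·w`. -/
theorem motion_equation_in_sliding_mode
    (n m z ψ : ℕ) (hn : 1 ≤ n) (hm : 1 ≤ m) (hz : 1 ≤ z) (hψ : 1 ≤ ψ)
    (A : Matrix (Fin n) (Fin z) ℝ) (B : Matrix (Fin n) (Fin m) ℝ)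
    (C : Matrix (Fin m) (Fin n) ℝ) (D : Matrix (Fin n) (Fin ψ) ℝ)
    (Z : (Fin n → ℝ) → (Fin z → ℝ))
    (ustar uI γ : ℝ → Fin m → ℝ) (w : ℝ → Fin ψ → ℝ)
    (x : ℝ → Fin n → ℝ) (ζ : ℝ → Fin m → ℝ)
    (hx : ∀ t : ℝ, HasDerivAt x
      (A.mulVec (Z (x t)) + B.mulVec (ustar t + uI t) + D.mulVec (w t) +
        B.mulVec (γ t)) t)
    (hζ : ∀ t : ℝ, HasDerivAt ζ
      (-(C.mulVec (A.mulVec (Z (x t)) + B.mulVec (ustar t) + D.mulVec (w t)))) t)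
    (hCB : IsUnit (C * B))
    (hslide : ∀ t : ℝ, HasDerivAt (fun s => C.mulVec (x s) + ζ s) 0 t) :
    ∀ t : ℝ, uI t = -γ t ∧
      HasDerivAt x (A.mulVec (Z (x t)) + B.mulVec (ustar t) + D.mulVec (w t)) t :=
  motion_equation_in_sliding_mode_general n m z ψ A B C D Z ustar uI γ w x ζ hx hζ hCB hslide
end

section
/- Let N ≥ 1 and, for each i ∈ {1,…,N}, let n_i ≥ 1, let V_i : ℝ^{n_i} → ℝ, and let α_{1i}, α_{2i}, κ_i > 0 and ρ_i ≥ 0 be constants such that α_{1i}·|ξ|² ≤ V_i(ξ) ≤ α_{2i}·|ξ|² for all ξ ∈ ℝ^{n_i}. Let F_i : ℝ^{n_1}×…×ℝ^{n_N} → ℝ satisfy, for all x = (x_1,…,x_N), F_i(x) ≤ −κ_i·V_i(x_i) + ρ_i·∑_{j≠i} |x_j|². Define Ξ_j := −κ_j + (∑_{i≠j} ρ_i)/α_{1j} and assume the small-gain condition Ξ_j < 0 for all j. Let Ξ be any real with max_j Ξ_j ≤ Ξ < 0 and set κ := −Ξ > 0, α₁ := min_i α_{1i}, α₂ := max_i α_{2i}.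 Then the function V(x) := ∑_{i=1}^N V_i(x_i) satisfies, for all x = (x_1,…,x_N): (a) α₁·∑_i |x_i|² ≤ V(x) ≤ α₂·∑_i |x_i|²; and (b) ∑_{i=1}^N F_i(x) ≤ −κ·V(x). -/
open Finset

/-!
Summing the dissipation inequalities and exchanging the order of the off-diagonal double sum,
the gain `ρ_i ∑_{j ≠ i} |x_j|²` that subsystem `i` receives is charged to the senders `j`, which
then carry the coefficient `∑_{i ≠ j} ρ_i` in front of `|x_j|² ≤ V_j(x_j) / α_{1j}`. The total is
thus at most `∑_j Ξ_j V_j(x_j) ≤ Ξ · V(x)`, because every `V_j(x_j)` is nonnegative.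
-/

section

variable {ι : Type*} [Fintype ι]

theorem iInf_mul_sum_le_sum {a s v : ι → ℝ} (hs : ∀ i, 0 ≤ s i) (h : ∀ i, a i * s i ≤ v i) :
    (⨅ i, a i) * ∑ i, s i ≤ ∑ i, v i := by
  rw [mul_sum]
  exact sum_le_sum fun i _ =>
    (mul_le_mul_of_nonneg_right (ciInf_le (Set.finite_range a).bddBelow i) (hs i)).trans (h i)

theorem sum_le_iSup_mul_sum {a s v : ι → ℝ} (hs : ∀ i, 0 ≤ s i) (h : ∀ i, v i ≤ a i * s i) :
    ∑ i, v i ≤ (⨆ i, a i) * ∑ i, s i := by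
  rw [mul_sum]
  exact sum_le_sum fun i _ =>
    (h i).trans (mul_le_mul_of_nonneg_right (le_ciSup (Set.finite_range a).bddAbove i) (hs i))

theorem sum_sum_erase_comm [DecidableEq ι] (f : ι → ι → ℝ) :
    ∑ i, ∑ j ∈ univ.erase i, f i j = ∑ j, ∑ i ∈ univ.erase j, f i j :=
  sum_comm' fun i j => by simp only [mem_erase, mem_univ, ne_comm, and_comm]

theorem mul_le_div_mul_of_mul_le {r a s v : ℝ} (hr : 0 ≤ r) (ha : 0 < a) (h : a * s ≤ v) :
    r * s ≤ r / a * v := by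
  rw [div_mul_eq_mul_div, le_div_iff₀ ha, mul_assoc, mul_comm s]
  exact mul_le_mul_of_nonneg_left h hr

theorem sum_decay_add_gain_le [DecidableEq ι] {κ ρ a s v : ι → ℝ} (hρ : ∀ i, 0 ≤ ρ i)
    (ha : ∀ i, 0 < a i) (h : ∀ i, a i * s i ≤ v i) :
    ∑ i, (-κ i * v i + ρ i * ∑ j ∈ univ.erase i, s j) ≤
      ∑ j, (-κ j + (∑ i ∈ univ.erase j, ρ i) / a j) * v j := by
  have hswap : ∑ i, ρ i * ∑ j ∈ univ.erase i, s j = ∑ j, (∑ i ∈ univ.erase j, ρ i) * s j := by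
    simp only [mul_sum, sum_mul]
    exact sum_sum_erase_comm fun i j => ρ i * s j
  rw [sum_add_distrib, hswap, ← sum_add_distrib]
  refine sum_le_sum fun j _ => ?_
  rw [add_mul]
  exact add_le_add le_rfl
    (mul_le_div_mul_of_mul_le (sum_nonneg fun i _ => hρ i) (ha j) (h j))

theorem sum_mul_le_mul_sum {c v : ι → ℝ} {C : ℝ} (hc : ∀ i, c i ≤ C) (hv : ∀ i, 0 ≤ v i) :
    ∑ i, c i * v i ≤ C * ∑ i, v i := by
  rw [mul_sum]
  exact sum_le_sum fun i _ => mul_le_mul_of_nonneg_right (hc i) (hv i)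

end

theorem compositional_CLF_general
    (N : ℕ) (n : Fin N → ℕ)
    (V : (i : Fin N) → (Fin (n i) → ℝ) → ℝ)
    (α₁ α₂ κv ρ : Fin N → ℝ)
    (hα₁ : ∀ i, 0 < α₁ i)
    (hρ : ∀ i, 0 ≤ ρ i)
    (hsand : ∀ (i : Fin N) (ξ : Fin (n i) → ℝ),
      α₁ i * (∑ k, ξ k ^ 2) ≤ V i ξ ∧ V i ξ ≤ α₂ i * (∑ k, ξ k ^ 2))
    (F : Fin N → ((i : Fin N) → Fin (n i) → ℝ) → ℝ)
    (hF : ∀ (i : Fin N) (x : (i : Fin N) → Fin (n i) → ℝ),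
      F i x ≤ -κv i * V i (x i) + ρ i * ∑ j ∈ Finset.univ.erase i, (∑ k, x j k ^ 2))
    (Ξf : Fin N → ℝ)
    (hΞf : ∀ j, Ξf j = -κv j + (∑ i ∈ Finset.univ.erase j, ρ i) / α₁ j)
    (Ξ κ : ℝ) (hΞub : ∀ j, Ξf j ≤ Ξ) (hκ : κ = -Ξ) :
    ∀ x : (i : Fin N) → Fin (n i) → ℝ,
      ((⨅ i, α₁ i) * (∑ i, ∑ k, x i k ^ 2) ≤ ∑ i, V i (x i) ∧
        ∑ i, V i (x i) ≤ (⨆ i, α₂ i) * (∑ i, ∑ k, x i k ^ 2)) ∧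
      ∑ i, F i x ≤ -κ * ∑ i, V i (x i) := by
  intro x
  have hsq : ∀ i, 0 ≤ ∑ k, x i k ^ 2 := fun i => sum_nonneg fun k _ => sq_nonneg _
  have hlower : ∀ i, α₁ i * ∑ k, x i k ^ 2 ≤ V i (x i) := fun i => (hsand i (x i)).1
  have hV : ∀ i, 0 ≤ V i (x i) := fun i => (mul_nonneg (hα₁ i).le (hsq i)).trans (hlower i)
  refine ⟨⟨iInf_mul_sum_le_sum hsq hlower, sum_le_iSup_mul_sum hsq fun i => (hsand i (x i)).2⟩, ?_⟩
  calc ∑ i, F i x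
      ≤ ∑ i, (-κv i * V i (x i) + ρ i * ∑ j ∈ univ.erase i, ∑ k, x j k ^ 2) :=
        sum_le_sum fun i _ => hF i x
    _ ≤ ∑ j, Ξf j * V j (x j) := by
        simp only [hΞf]
        exact sum_decay_add_gain_le hρ hα₁ hlower
    _ ≤ -κ * ∑ i, V i (x i) := by
        rw [hκ, neg_neg]
        exact sum_mul_le_mul_sum hΞub hV

/-- Theorem 4 (Compositional Results), stated pointwise: given ISS Lyapunov
functions `V_i` with sandwich constants `α_{1i}, α_{2i}`, decay rates `κ_i`,
ISS gains `ρ_i`, Lie-derivative values `F_i(x) ≤ −κ_i·V_i(x_i) + ρ_i·∑_{j≠i}|x_j|²`,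
and the small-gain condition `Ξ_j < 0` for all `j`, the sum `V = ∑ V_i`
satisfies `α₁·|x|² ≤ V(x) ≤ α₂·|x|²` and `∑ F_i(x) ≤ −κ·V(x)` with
`κ = −Ξ`, `α₁ = min α_{1i}`, `α₂ = max α_{2i}`. -/
theorem compositional_CLF
    (N : ℕ) (hN : 1 ≤ N) (n : Fin N → ℕ) (hn : ∀ i, 1 ≤ n i)
    (V : (i : Fin N) → (Fin (n i) → ℝ) → ℝ)
    (α₁ α₂ κv ρ : Fin N → ℝ)
    (hα₁ : ∀ i, 0 < α₁ i) (hα₂ : ∀ i, 0 < α₂ i)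
    (hκv : ∀ i, 0 < κv i) (hρ : ∀ i, 0 ≤ ρ i)
    (hsand : ∀ (i : Fin N) (ξ : Fin (n i) → ℝ),
      α₁ i * (∑ k, ξ k ^ 2) ≤ V i ξ ∧ V i ξ ≤ α₂ i * (∑ k, ξ k ^ 2))
    (F : Fin N → ((i : Fin N) → Fin (n i) → ℝ) → ℝ)
    (hF : ∀ (i : Fin N) (x : (i : Fin N) → Fin (n i) → ℝ),
      F i x ≤ -κv i * V i (x i) + ρ i * ∑ j ∈ Finset.univ.erase i, (∑ k, x j k ^ 2))
    (Ξf : Fin N → ℝ)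
    (hΞf : ∀ j, Ξf j = -κv j + (∑ i ∈ Finset.univ.erase j, ρ i) / α₁ j)
    (hsg : ∀ j, Ξf j < 0)
    (Ξ κ : ℝ) (hΞub : ∀ j, Ξf j ≤ Ξ) (hΞneg : Ξ < 0) (hκ : κ = -Ξ) :
    ∀ x : (i : Fin N) → Fin (n i) → ℝ,
      ((⨅ i, α₁ i) * (∑ i, ∑ k, x i k ^ 2) ≤ ∑ i, V i (x i) ∧
        ∑ i, V i (x i) ≤ (⨆ i, α₂ i) * (∑ i, ∑ k, x i k ^ 2)) ∧
      ∑ i, F i x ≤ -κ * ∑ i, V i (x i) :=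
  compositional_CLF_general N n V α₁ α₂ κv ρ hα₁ hρ hsand F hF Ξf hΞf Ξ κ hΞub hκ
end

section
/- Let n, m, z, ψ ≥ 1, let A ∈ ℝ^{n×z}, B ∈ ℝ^{n×m}, C ∈ ℝ^{m×n}, D ∈ ℝ^{n×ψ}, and let Z : ℝⁿ → ℝ^z. Suppose the m×m matrix C·B is symmetric positive definite with smallest eigenvalue λ_min > 0 and largest eigenvalue λ_max, let Γ ≥ 0, and let Θ > Γ·λ_max/λ_min. Let u*, u_I, γ : ℝ → ℝ^m with |γ(t)| ≤ Γ for all t ≥ 0, let w : ℝ → ℝ^ψ, and let x : ℝ → ℝⁿ and ζ : ℝ → ℝ^m be differentiable with, for all t: x'(t) = A·Z(x(t)) + B·(u*(t) + u_I(t)) + D·w(t) + B·γ(t) and ζ'(t) = −C·(A·Z(x(t)) + B·u*(t) + D·w(t)), and with the initialization ζ(0) = −C·x(0). Define the integral sliding variable σ(t) := C·x(t) + ζ(t), and assume the discontinuous control law u_I(t) = −Θ·σ(t)/|σ(t)| holds at every t ≥ 0 with σ(t) ≠ 0. Then σ(t) = 0 for all t ≥ 0; that is, the integral sliding mode is enforced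 from the initial time instant. -/
open Matrix

/-- The Euclidean norm of a vector in `ℝ^k`. -/
noncomputable def eucNorm {k : ℕ} (v : Fin k → ℝ) : ℝ := Real.sqrt (∑ i, v i ^ 2)

lemma spectral_dot {m : ℕ} {M : Matrix (Fin m) (Fin m) ℝ} (hM : M.IsHermitian)
    (v u : Fin m → ℝ) :
    v ⬝ᵥ (M *ᵥ u) =
      ∑ i, hM.eigenvalues i *
        (((hM.eigenvectorUnitary : Matrix (Fin m) (Fin m) ℝ)ᵀ *ᵥ v) i *
         (((hM.eigenvectorUnitary : Matrix (Fin m) (Fin m) ℝ)ᵀ *ᵥ u) i)) := by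
  set U : Matrix (Fin m) (Fin m) ℝ := (hM.eigenvectorUnitary : Matrix (Fin m) (Fin m) ℝ) with hU
  have hstar : star U = Uᵀ := rfl
  have hspec : M = U * diagonal hM.eigenvalues * Uᵀ := by
    have := hM.spectral_theorem
    rw [← hstar, hU]; simpa using this
  conv_lhs => rw [hspec]
  rw [← mulVec_mulVec, ← mulVec_mulVec, dotProduct_mulVec, ← mulVec_transpose]
  simp only [dotProduct, mulVec_diagonal]
  exact Finset.sum_congr rfl fun i _ => by ring

lemma spectral_normsq {m : ℕ} {M : Matrix (Fin m) (Fin m) ℝ} (hM : M.IsHermitian)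
    (v : Fin m → ℝ) :
    ∑ i, (((hM.eigenvectorUnitary : Matrix (Fin m) (Fin m) ℝ)ᵀ *ᵥ v) i)^2 = ∑ i, (v i)^2 := by
  set U : Matrix (Fin m) (Fin m) ℝ := (hM.eigenvectorUnitary : Matrix (Fin m) (Fin m) ℝ) with hU
  have hstar : star U = Uᵀ := rfl
  have h1 : U * Uᵀ = 1 := by
    rw [← hstar]; exact (Matrix.mem_unitaryGroup_iff).mp hM.eigenvectorUnitary.2
  have h2 : ∑ i, ((Uᵀ *ᵥ v) i)^2 = (Uᵀ *ᵥ v) ⬝ᵥ (Uᵀ *ᵥ v) := by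
    simp [dotProduct, sq]
  rw [h2, dotProduct_mulVec, vecMul_transpose, mulVec_mulVec, h1, one_mulVec]
  simp [dotProduct, sq]

lemma quad_lower {m : ℕ} [Nonempty (Fin m)] {M : Matrix (Fin m) (Fin m) ℝ} (hM : M.PosDef)
    (v : Fin m → ℝ) :
    (⨅ i, hM.1.eigenvalues i) * ∑ i, (v i)^2 ≤ v ⬝ᵥ (M *ᵥ v) := by
  rw [spectral_dot hM.1 v v, ← spectral_normsq hM.1 v, Finset.mul_sum]
  apply Finset.sum_le_sum
  intro i _
  have h1 : (⨅ j, hM.1.eigenvalues j) ≤ hM.1.eigenvalues i :=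
    ciInf_le (Set.Finite.bddBelow (Set.finite_range _)) i
  have := sq_nonneg ((((hM.1.eigenvectorUnitary : Matrix (Fin m) (Fin m) ℝ))ᵀ *ᵥ v) i)
  nlinarith [this]

lemma quad_cross {m : ℕ} [Nonempty (Fin m)] {M : Matrix (Fin m) (Fin m) ℝ} (hM : M.PosDef)
    (v u : Fin m → ℝ) :
    v ⬝ᵥ (M *ᵥ u) ≤ (⨆ i, hM.1.eigenvalues i) *
      (Real.sqrt (∑ i, (v i)^2) * Real.sqrt (∑ i, (u i)^2)) := by
  set U : Matrix (Fin m) (Fin m) ℝ := (hM.1.eigenvectorUnitary : Matrix (Fin m) (Fin m) ℝ)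
  set yv := Uᵀ *ᵥ v
  set yu := Uᵀ *ᵥ u
  set lmax := ⨆ i, hM.1.eigenvalues i with hlmax
  have hle : ∀ i, hM.1.eigenvalues i ≤ lmax := fun i =>
    le_ciSup (Set.Finite.bddAbove (Set.finite_range _)) i
  have hpos : ∀ i, 0 < hM.1.eigenvalues i := hM.eigenvalues_pos
  have hlmax0 : 0 ≤ lmax := le_trans (hpos (Classical.arbitrary _)).le (hle _)
  rw [spectral_dot hM.1 v u]
  have step1 : ∑ i, hM.1.eigenvalues i * (yv i * yu i) ≤ lmax * ∑ i, |yv i| * |yu i| := by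
    rw [Finset.mul_sum]
    apply Finset.sum_le_sum
    intro i _
    calc hM.1.eigenvalues i * (yv i * yu i) ≤ hM.1.eigenvalues i * (|yv i| * |yu i|) := by
          apply mul_le_mul_of_nonneg_left _ (hpos i).le
          rw [← abs_mul]; exact le_abs_self _
      _ ≤ lmax * (|yv i| * |yu i|) :=
          mul_le_mul_of_nonneg_right (hle i) (by positivity)
  refine step1.trans ?_
  apply mul_le_mul_of_nonneg_left _ hlmax0
  have hcs : (∑ i, |yv i| * |yu i|)^2 ≤ (∑ i, (yv i)^2) * ∑ i, (yu i)^2 := by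
    have := Finset.sum_mul_sq_le_sq_mul_sq Finset.univ (fun i => |yv i|) (fun i => |yu i|)
    simpa [sq_abs] using this
  have hnn : 0 ≤ ∑ i, |yv i| * |yu i| :=
    Finset.sum_nonneg fun i _ => by positivity
  have := Real.sqrt_le_sqrt hcs
  rw [Real.sqrt_sq hnn, Real.sqrt_mul (Finset.sum_nonneg fun i _ => sq_nonneg _)] at this
  calc ∑ i, |yv i| * |yu i| ≤ Real.sqrt (∑ i, (yv i)^2) * Real.sqrt (∑ i, (yu i)^2) := this
    _ = Real.sqrt (∑ i, (v i)^2) * Real.sqrt (∑ i, (u i)^2) := by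
        rw [spectral_normsq hM.1 v, spectral_normsq hM.1 u]


/-- Lemma 2 (Designing Θ), differentiable-solution version: along the perturbed
dynamics `x' = A·Z(x) + B·(u* + u_I) + D·w + B·γ` with `|γ(t)| ≤ Γ` for `t ≥ 0`,
transient function `ζ' = −C·(A·Z(x) + B·u* + D·w)` initialized at
`ζ(0) = −C·x(0)`, sliding variable `σ = C·x + ζ`, `C·B` symmetric positive
definite, and unit-vector control `u_I = −Θ·σ/|σ|` (whenever `σ ≠ 0`) with gain
`Θ > Γ·λ_max(C·B)/λ_min(C·B)`, the sliding mode `σ(t) = 0` is enforced for all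
`t ≥ 0`. -/
theorem ISM_enforced_from_initial_time
    (n m z ψ : ℕ) (hn : 1 ≤ n) (hm : 1 ≤ m) (hz : 1 ≤ z) (hψ : 1 ≤ ψ)
    (A : Matrix (Fin n) (Fin z) ℝ) (B : Matrix (Fin n) (Fin m) ℝ)
    (C : Matrix (Fin m) (Fin n) ℝ) (D : Matrix (Fin n) (Fin ψ) ℝ)
    (Z : (Fin n → ℝ) → (Fin z → ℝ))
    (hCB : (C * B).PosDef)
    (Γ Θ : ℝ) (hΓ : 0 ≤ Γ)
    (hΘ : Θ > Γ * (⨆ i, hCB.1.eigenvalues i) / (⨅ i, hCB.1.eigenvalues i))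
    (ustar uI γ : ℝ → Fin m → ℝ) (w : ℝ → Fin ψ → ℝ)
    (x : ℝ → Fin n → ℝ) (ζ : ℝ → Fin m → ℝ)
    (hγ : ∀ t : ℝ, 0 ≤ t → eucNorm (γ t) ≤ Γ)
    (hx : ∀ t : ℝ, HasDerivAt x
      (A.mulVec (Z (x t)) + B.mulVec (ustar t + uI t) + D.mulVec (w t) +
        B.mulVec (γ t)) t)
    (hζ : ∀ t : ℝ, HasDerivAt ζ
      (-(C.mulVec (A.mulVec (Z (x t)) + B.mulVec (ustar t) + D.mulVec (w t)))) t)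
    (hζ0 : ζ 0 = -(C.mulVec (x 0)))
    (huI : ∀ t : ℝ, 0 ≤ t → C.mulVec (x t) + ζ t ≠ 0 →
      uI t = (-(Θ / eucNorm (C.mulVec (x t) + ζ t))) • (C.mulVec (x t) + ζ t)) :
    ∀ t : ℝ, 0 ≤ t → C.mulVec (x t) + ζ t = 0 := by
  classical
  haveI : Nonempty (Fin m) := ⟨⟨0, hm⟩⟩
  set M : Matrix (Fin m) (Fin m) ℝ := C * B with hM
  set lmin := ⨅ i, hCB.1.eigenvalues i with hlmin_def
  set lmax := ⨆ i, hCB.1.eigenvalues i with hlmax_def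
  have hlmin : 0 < lmin := by
    obtain ⟨i, hi⟩ := exists_eq_ciInf_of_finite (f := hCB.1.eigenvalues)
    rw [hlmin_def, ← hi]; exact hCB.eigenvalues_pos i
  have hlmax : 0 < lmax := lt_of_lt_of_le (hCB.eigenvalues_pos (Classical.arbitrary _))
    (le_ciSup (Set.Finite.bddAbove (Set.finite_range _)) _)
  have hkey : Γ * lmax < Θ * lmin := by
    have := (div_lt_iff₀ hlmin).mp hΘ
    linarith
  have hΘpos : 0 < Θ := by
    have : 0 ≤ Γ * lmax / lmin := by positivity
    linarith
  set σ : ℝ → Fin m → ℝ := fun t => C.mulVec (x t) + ζ t with hσdef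
  have hσ0 : σ 0 = 0 := by simp [hσdef, hζ0]
  -- derivative of σ
  set L : (Fin n → ℝ) →L[ℝ] (Fin m → ℝ) := LinearMap.toContinuousLinearMap (Matrix.mulVecLin C)
    with hL
  have hLapp : ∀ v, L v = C.mulVec v := fun v => rfl
  have hσ' : ∀ t, HasDerivAt σ (M.mulVec (uI t + γ t)) t := by
    intro t
    have h1 : HasDerivAt (fun s => C.mulVec (x s))
        (C.mulVec (A.mulVec (Z (x t)) + B.mulVec (ustar t + uI t) + D.mulVec (w t) +
          B.mulVec (γ t))) t := by
      have := (L.hasFDerivAt).comp_hasDerivAt t (hx t)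
      exact this
    have h2 := h1.add (hζ t)
    refine h2.congr_deriv ?_
    rw [hM, ← mulVec_mulVec]
    simp only [mulVec_add]
    abel
  set V : ℝ → ℝ := fun t => ∑ i, (σ t i)^2 with hVdef
  have hV' : ∀ t, HasDerivAt V (2 * (σ t ⬝ᵥ (M *ᵥ (uI t + γ t)))) t := by
    intro t
    have hcomp : ∀ i : Fin m, HasDerivAt (fun s => σ s i) ((M *ᵥ (uI t + γ t)) i) t :=
      fun i => hasDerivAt_pi.mp (hσ' t) i
    have hsq : ∀ i : Fin m, HasDerivAt (fun s => (σ s i)^2)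
        (2 * (σ t i)^1 * (M *ᵥ (uI t + γ t)) i) t := by
      intro i
      exact ((hcomp i).fun_pow 2).congr_deriv (by norm_num)
    have := HasDerivAt.fun_sum (fun i (_ : i ∈ Finset.univ) => hsq i)
    refine this.congr_deriv ?_
    simp [dotProduct, Finset.mul_sum]
    exact Finset.sum_congr rfl fun i _ => by ring
  have hVcont : Continuous V := by
    have : Differentiable ℝ V := fun t => (hV' t).differentiableAt
    exact this.continuous
  have hderiv_nonpos : ∀ t ∈ interior (Set.Ici (0:ℝ)), deriv V t ≤ 0 := by
    intro t ht
    rw [interior_Ici] at ht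
    have ht0 : (0:ℝ) ≤ t := le_of_lt ht
    rw [(hV' t).deriv]
    by_cases hσt : σ t = 0
    · simp [hσt]
    · have huIt := huI t ht0 hσt
      set N := eucNorm (σ t) with hNdef
      have hsum_pos : 0 < ∑ i, (σ t i)^2 := by
        have hne : ∃ i, σ t i ≠ 0 := by
          by_contra h
          push_neg at h
          exact hσt (funext h)
        obtain ⟨i, hi⟩ := hne
        apply Finset.sum_pos' (fun j _ => sq_nonneg _)
        exact ⟨i, Finset.mem_univ i, by positivity⟩
      have hN : 0 < N := Real.sqrt_pos.mpr hsum_pos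
      have hNsq : N^2 = ∑ i, (σ t i)^2 := Real.sq_sqrt hsum_pos.le
      have hsplit : σ t ⬝ᵥ (M *ᵥ (uI t + γ t)) =
          (-(Θ / N)) * (σ t ⬝ᵥ (M *ᵥ σ t)) + σ t ⬝ᵥ (M *ᵥ γ t) := by
        rw [mulVec_add]
        rw [show uI t = (-(Θ / N)) • σ t from huIt]
        rw [mulVec_smul, dotProduct_add, dotProduct_smul]
        simp [smul_eq_mul]
      rw [hsplit]
      have hgq : σ t ⬝ᵥ (M *ᵥ σ t) ≥ lmin * N^2 := by
        rw [hNsq]; exact quad_lower hCB (σ t)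
      have hcross : σ t ⬝ᵥ (M *ᵥ γ t) ≤ lmax * (N * Γ) := by
        have h1 := quad_cross hCB (σ t) (γ t)
        have h2 : Real.sqrt (∑ i, (γ t i)^2) ≤ Γ := hγ t ht0
        have h3 : Real.sqrt (∑ i, (σ t i)^2) = N := rfl
        calc σ t ⬝ᵥ (M *ᵥ γ t) ≤ lmax * (N * Real.sqrt (∑ i, (γ t i)^2)) := by
              rw [← h3]; exact h1
          _ ≤ lmax * (N * Γ) := by
              apply mul_le_mul_of_nonneg_left _ hlmax.le
              exact mul_le_mul_of_nonneg_left h2 hN.le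
      have ht1 : (-(Θ / N)) * (σ t ⬝ᵥ (M *ᵥ σ t)) ≤ (-(Θ / N)) * (lmin * N^2) := by
        apply mul_le_mul_of_nonpos_left hgq
        have : 0 < Θ / N := div_pos hΘpos hN
        linarith
      have heq : (-(Θ / N)) * (lmin * N^2) = -(Θ * lmin * N) := by
        field_simp
      nlinarith [hN.le]
  have hanti : AntitoneOn V (Set.Ici 0) := by
    apply antitoneOn_of_deriv_nonpos (convex_Ici 0) (hVcont.continuousOn)
    · exact fun t _ => ((hV' t).differentiableAt).differentiableWithinAt
    · exact hderiv_nonpos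
  intro t ht
  have hVt : V t ≤ V 0 := hanti (Set.self_mem_Ici) ht ht
  have hV0 : V 0 = 0 := by simp [hVdef, hσ0]
  have hVnn : 0 ≤ V t := Finset.sum_nonneg fun i _ => sq_nonneg _
  have hVt0 : V t = 0 := le_antisymm (by linarith) hVnn
  have : ∀ i, σ t i = 0 := by
    intro i
    have := (Finset.sum_eq_zero_iff_of_nonneg (fun j _ => sq_nonneg (σ t j))).mp hVt0 i
      (Finset.mem_univ i)
    exact pow_eq_zero_iff (by norm_num) |>.mp this
  exact funext this
end
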